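/- Let p be prime, a, b ∈ ℚ, and k ∈ ℕ₀. Then the set {a·p^{kn} + b : n ∈ ℕ₀} ∩ ℤ≥0 (viewed as a subset of ℚ) is a finite union of p-arithmetic sequences. -/
import Mathlib


/-- A `p`-arithmetic sequence: a subset of `ℚ` of the form
`{c·p^{k'n} + d : n ∈ ℕ₀}` for some `c, d ∈ ℚ` and `k' ∈ ℕ₀`. -/
def IsPArithSeq (p : ℕ) (S : Set ℚ) : Prop :=
  ∃ (c d : ℚ) (k' : ℕ), S = {x : ℚ | ∃ n : ℕ, x = c * (p : ℚ) ^ (k' * n) + d}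

/-- A finite union of `p`-arithmetic sequences. -/
def IsFinUnionPArith (p : ℕ) (S : Set ℚ) : Prop :=
  ∃ (M : ℕ) (f : Fin M → Set ℚ), (∀ i, IsPArithSeq p (f i)) ∧ S = ⋃ i, f i

lemma singleton_parith (p : ℕ) (x : ℚ) : IsPArithSeq p {x} := by
  refine ⟨0, x, 0, ?_⟩
  ext y
  simp

lemma finite_finUnion (p : ℕ) {S : Set ℚ} (hS : S.Finite) : IsFinUnionPArith p S := by
  classical
  refine ⟨hS.toFinset.card, fun i => {((hS.toFinset.equivFin.symm i : ℚ))},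
    fun i => singleton_parith p _, ?_⟩
  ext x
  simp only [Set.mem_iUnion, Set.mem_singleton_iff]
  constructor
  · intro hx
    exact ⟨hS.toFinset.equivFin ⟨x, hS.mem_toFinset.mpr hx⟩, by simp⟩
  · rintro ⟨i, rfl⟩
    exact hS.mem_toFinset.mp (hS.toFinset.equivFin.symm i).2

/-- For a prime `p`, `a, b ∈ ℚ` and `k ∈ ℕ₀`, the set
`{a·p^{kn} + b : n ∈ ℕ₀} ∩ ℤ≥0` (inside `ℚ`) is a finite union of
`p`-arithmetic sequences. -/
theorem stmt4 (p : ℕ) (hp : p.Prime) (a b : ℚ) (k : ℕ) :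
    IsFinUnionPArith p
      ({x : ℚ | ∃ n : ℕ, x = a * (p : ℚ) ^ (k * n) + b} ∩
        {x : ℚ | ∃ N : ℕ, x = (N : ℚ)}) := by
  classical
  have hp1 : (1:ℚ) < (p:ℚ) := by exact_mod_cast hp.one_lt
  by_cases hk : k = 0
  · apply finite_finUnion
    apply Set.Finite.subset (Set.finite_singleton (a + b))
    rintro x ⟨⟨n, rfl⟩, -⟩
    simp [hk]
  by_cases ha0 : a = 0
  · apply finite_finUnion
    apply Set.Finite.subset (Set.finite_singleton b)
    rintro x ⟨⟨n, rfl⟩, -⟩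
    simp [ha0]
  rcases lt_trichotomy a 0 with ha | ha | ha
  · -- a < 0 : only finitely many values possible
    apply finite_finUnion
    apply Set.Finite.subset (((Set.finite_Iic (⌈a + b⌉.toNat))).image (Nat.cast : ℕ → ℚ))
    rintro x ⟨⟨n, rfl⟩, N, hN⟩
    have h1 : (1:ℚ) ≤ (p:ℚ) ^ (k*n) := one_le_pow₀ hp1.le
    have hle : a * (p:ℚ)^(k*n) + b ≤ a + b := by nlinarith
    rw [hN] at hle
    have h2 : (N:ℤ) ≤ ⌈a+b⌉ := by
      have := le_trans hle (Int.le_ceil (a+b))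
      exact_mod_cast this
    exact ⟨N, Set.mem_Iic.mpr (by omega), hN.symm⟩
  · exact absurd ha ha0
  -- a > 0
  by_cases hTne : ∃ n : ℕ, ∃ N : ℕ, a * (p:ℚ)^(k*n) + b = N
  swap
  · apply finite_finUnion
    have : ({x : ℚ | ∃ n : ℕ, x = a * (p : ℚ) ^ (k * n) + b} ∩
        {x : ℚ | ∃ N : ℕ, x = (N : ℚ)}) = ∅ := by
      ext x
      simp only [Set.mem_inter_iff, Set.mem_empty_iff_false, iff_false]
      rintro ⟨⟨n, rfl⟩, N, hN⟩
      exact hTne ⟨n, N, hN⟩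
    rw [this]; exact Set.finite_empty
  set n1 := Nat.find hTne with hn1def
  obtain ⟨N1, hN1⟩ : ∃ N : ℕ, a * (p:ℚ)^(k*n1) + b = N := Nat.find_spec hTne
  set c0 : ℚ := a * (p:ℚ)^(k*n1) with hc0
  have hc0pos : 0 < c0 := mul_pos ha (pow_pos (by linarith) _)
  set Q : ℕ → Prop := fun j => ∃ z : ℤ, c0 * ((p:ℚ)^(k*j) - 1) = z with hQdef
  have hTQ : ∀ j : ℕ, (∃ N : ℕ, a * (p:ℚ)^(k*(n1+j)) + b = N) ↔ Q j := by
    intro j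
    have hsplit : (p:ℚ)^(k*(n1+j)) = (p:ℚ)^(k*n1) * (p:ℚ)^(k*j) := by
      rw [← pow_add]; ring_nf
    constructor
    · rintro ⟨N, hN⟩
      rw [hsplit] at hN
      exact ⟨(N:ℤ) - N1, by push_cast; linear_combination hN - hN1⟩
    · rintro ⟨z, hz⟩
      have hz0 : (0:ℤ) ≤ z := by
        have h1 : (1:ℚ) ≤ (p:ℚ)^(k*j) := one_le_pow₀ hp1.le
        have : (0:ℚ) ≤ (z:ℚ) := by rw [← hz]; nlinarith
        exact_mod_cast this
      refine ⟨N1 + z.toNat, ?_⟩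
      rw [hsplit]
      have htn : ((z.toNat : ℚ)) = (z : ℚ) := by exact_mod_cast Int.toNat_of_nonneg hz0
      push_cast
      rw [htn]
      linear_combination hN1 + hz
  have hQ0 : Q 0 := ⟨0, by simp⟩
  have hQadd : ∀ j j' : ℕ, Q j → Q j' → Q (j + j') := by
    rintro j j' ⟨z, hz⟩ ⟨w, hw⟩
    refine ⟨z * (p:ℤ)^(k*j') + w, ?_⟩
    rw [show k*(j+j') = k*j + k*j' from by ring, pow_add]
    push_cast
    linear_combination (p:ℚ)^(k*j') * hz + hw
  have hQsub : ∀ j j' : ℕ, j' ≤ j → Q j → Q j' → Q (j - j') := by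
    rintro j j' hle ⟨z, hz⟩ ⟨w, hw⟩
    refine ⟨z - (p:ℤ)^(k*(j-j')) * w, ?_⟩
    have hkj : k*(j-j') + k*j' = k*j := by
      rw [← Nat.mul_add, Nat.sub_add_cancel hle]
    rw [← hkj, pow_add] at hz
    push_cast
    linear_combination hz - (p:ℚ)^(k*(j-j')) * hw
  have hQmul : ∀ (j t : ℕ), Q j → Q (j * t) := by
    intro j t hj
    induction t with
    | zero => simpa using hQ0
    | succ t ih => rw [Nat.mul_succ]; exact hQadd _ _ ih hj
  -- every n with the property satisfies n1 ≤ n and Q (n - n1)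
  have hkey : ∀ n : ℕ, (∃ N : ℕ, a * (p:ℚ)^(k*n) + b = N) → n1 ≤ n ∧ Q (n - n1) := by
    intro n hn
    have hle : n1 ≤ n := Nat.find_min' hTne hn
    refine ⟨hle, ?_⟩
    have : n = n1 + (n - n1) := by omega
    rw [this] at hn
    exact (hTQ _).mp hn
  by_cases hm : ∃ j : ℕ, 0 < j ∧ Q j
  · -- single p-arithmetic sequence
    set m := Nat.find hm with hmdef
    obtain ⟨hmpos, hmQ⟩ : 0 < m ∧ Q m := Nat.find_spec hm
    have hmmin : ∀ j, j < m → ¬(0 < j ∧ Q j) := fun j hj => Nat.find_min hm hj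
    refine ⟨1, fun _ => {x : ℚ | ∃ t : ℕ, x = c0 * (p:ℚ)^((k*m)*t) + b},
      fun _ => ⟨c0, b, k*m, rfl⟩, ?_⟩
    rw [Set.iUnion_const]
    ext x
    simp only [Set.mem_inter_iff, Set.mem_setOf_eq]
    constructor
    · rintro ⟨⟨n, rfl⟩, N, hN⟩
      obtain ⟨hle, hQj⟩ := hkey n ⟨N, hN⟩
      set j := n - n1 with hjdef
      have hmod : j % m = 0 := by
        by_contra hne
        have hQmod : Q (j % m) := by
          have h1 : Q (m * (j / m)) := hQmul m (j/m) hmQ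
          have h2 : m * (j / m) ≤ j := Nat.mul_div_le j m
          have h3 : j - m * (j / m) = j % m :=
            Nat.sub_eq_of_eq_add ((Nat.div_add_mod j m).symm.trans (Nat.add_comm _ _))
          rw [← h3]
          exact hQsub _ _ h2 hQj h1
        exact hmmin (j % m) (Nat.mod_lt _ hmpos) ⟨Nat.pos_of_ne_zero hne, hQmod⟩
      refine ⟨j / m, ?_⟩
      have hn : n = n1 + m * (j / m) := by
        have hjm : m * (j / m) = j := Nat.mul_div_cancel' (Nat.dvd_of_mod_eq_zero hmod)
        rw [(Nat.add_sub_cancel' hle).symm, hjm]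
      rw [hn, show k*(n1 + m*(j/m)) = k*n1 + (k*m)*(j/m) from by ring, pow_add]
      rw [hc0]; ring
    · rintro ⟨t, rfl⟩
      have heq : c0 * (p:ℚ)^((k*m)*t) + b = a * (p:ℚ)^(k*(n1 + m*t)) + b := by
        rw [show k*(n1 + m*t) = k*n1 + (k*m)*t from by ring, pow_add, hc0]; ring
      refine ⟨⟨n1 + m*t, heq⟩, ?_⟩
      obtain ⟨N, hN⟩ := (hTQ (m*t)).mpr (hQmul m t hmQ)
      exact ⟨N, by rw [heq]; exact hN⟩
  · -- only the single value at n1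
    apply finite_finUnion
    apply Set.Finite.subset (Set.finite_singleton (a * (p:ℚ)^(k*n1) + b))
    rintro x ⟨⟨n, rfl⟩, N, hN⟩
    obtain ⟨hle, hQj⟩ := hkey n ⟨N, hN⟩
    have : n - n1 = 0 := by
      by_contra hne
      exact hm ⟨n - n1, Nat.pos_of_ne_zero hne, hQj⟩
    have hn : n = n1 := by omega
    rw [hn]
    rfl
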